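/- arXiv:1909.11319 — 7 statements merged into one kernel-verified Lean document; each statement's English description precedes it below -/
import Mathlib

section
/- Let a be a nonzero integer, let k ≥ 1 be an integer, and let y be a rational number with |y| ≥ 1 and y ≠ 1. Then [a, 2, …, 2, y] (with k copies of 2 between a and y) = [a − 1, −(k+1), y − 1]. -/
/-- The (subtractive) continued fraction value of a finite list of rationals:
`cf [] = 0` and `cf (a :: t) = (a - cf t)⁻¹`. -/
def cf : List ℚ → ℚ
  | [] => 0
  | a :: t => (a - cf t)⁻¹

/- Both sides reduce to `(a - 1 + (y - 1) / ((k + 1) y - k))⁻¹`: a run of `k` twos in front of `y`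
has value `1 - (y - 1) / ((k + 1) y - k)`, and `[-(k + 1), y - 1] = -(y - 1) / ((k + 1) y - k)`. -/

lemma succ_mul_sub_ne_zero {y : ℚ} (hy : 1 ≤ |y|) (k : ℕ) : ((k : ℚ) + 1) * y - k ≠ 0 := by
  have hk : (0 : ℚ) ≤ k := k.cast_nonneg
  rcases le_abs'.mp hy with hy | hy <;> nlinarith

lemma cf_replicate_two_append {y : ℚ} (hy : 1 ≤ |y|) (k : ℕ) :
    cf (List.replicate k 2 ++ [y]) = 1 - (y - 1) / (((k : ℚ) + 1) * y - k) := by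
  induction k with
  | zero =>
    have hy0 : y ≠ 0 := by rintro rfl; norm_num at hy
    simp only [List.replicate_zero, List.nil_append, cf, sub_zero, Nat.cast_zero, zero_add, one_mul]
    rw [one_sub_div hy0, sub_sub_cancel, one_div]
  | succ k ih =>
    have hD := succ_mul_sub_ne_zero hy k
    have hD' := succ_mul_sub_ne_zero hy (k + 1)
    have two_sub_one_sub (x : ℚ) : 2 - (1 - x) = 1 + x := by ring
    have hnext : ((k : ℚ) + 1) * y - k + (y - 1) = ((↑(k + 1) : ℚ) + 1) * y - ↑(k + 1) := by
      push_cast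
      ring
    rw [List.replicate_succ, List.cons_append, cf, ih, two_sub_one_sub, one_add_div hD, hnext,
      inv_div, eq_sub_iff_add_eq, ← add_div, hnext, div_eq_one_iff_eq hD']

lemma cf_neg_succ_pair {y : ℚ} (hy : y ≠ 1) (k : ℕ) :
    cf [-((k : ℚ) + 1), y - 1] = -((y - 1) / (((k : ℚ) + 1) * y - k)) := by
  have hy' : y - 1 ≠ 0 := sub_ne_zero.mpr hy
  have hinner : -((k : ℚ) + 1) - (y - 1)⁻¹ = -((((k : ℚ) + 1) * y - k) / (y - 1)) := by
    field_simp
    ring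
  simp only [cf, sub_zero, hinner, inv_neg, inv_div]

theorem stmt_2_general (a : ℤ) (k : ℕ) (y : ℚ)
    (hy1 : 1 ≤ |y|) (hy2 : y ≠ 1) :
    cf ((a : ℚ) :: (List.replicate k (2 : ℚ) ++ [y])) =
      cf [(a : ℚ) - 1, -((k : ℚ) + 1), y - 1] := by
  rw [cf, cf, cf_replicate_two_append hy1, cf_neg_succ_pair hy2]
  ring

theorem stmt_2 (a : ℤ) (ha : a ≠ 0) (k : ℕ) (hk : 1 ≤ k) (y : ℚ)
    (hy1 : 1 ≤ |y|) (hy2 : y ≠ 1) :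
    cf ((a : ℚ) :: (List.replicate k (2 : ℚ) ++ [y])) =
      cf [(a : ℚ) - 1, -((k : ℚ) + 1), y - 1] :=
  stmt_2_general a k y hy1 hy2
end

section
/- Let a be a nonzero integer, let k ≥ 1 be an integer, and let y be a rational number with |y| ≥ 1 and y ≠ −1. Then [a, −2, …, −2, y] (with k copies of −2 between a and y) = [a + 1, k + 1, y + 1]. -/
lemma inv_neg_two_sub_inv_sub_one_add_one {w : ℚ} (hw : w ≠ 0) (hw1 : w + 1 ≠ 0) :
    (-2 - (w⁻¹ - 1))⁻¹ + 1 = (w + 1)⁻¹ := by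
  rw [show -2 - (w⁻¹ - 1) = -((w + 1) / w) by field_simp; ring, inv_neg, inv_div]
  field_simp
  ring

lemma cf_replicate_neg_two_append_add_one {y : ℚ} (hy : y + 1 ≠ 0) {k : ℕ}
    (hk : ∀ j ≤ k, (j : ℚ) + 1 - (y + 1)⁻¹ ≠ 0) :
    cf (List.replicate k (-2) ++ [y]) + 1 = cf [(k : ℚ) + 1, y + 1] := by
  induction k with
  | zero =>
    have hy0 : y ≠ 0 := by
      rintro rfl
      simpa using hk 0 le_rfl
    simp only [cf, List.replicate_zero, List.nil_append, sub_zero, Nat.cast_zero, zero_add]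
    rw [show 1 - (y + 1)⁻¹ = y / (y + 1) by field_simp; ring, inv_div]
    field_simp
    ring
  | succ k ih =>
    have hw := hk k (by omega)
    have hw1 : ((k : ℚ) + 1 - (y + 1)⁻¹) + 1 ≠ 0 := by
      convert hk (k + 1) le_rfl using 1
      push_cast
      ring
    have ih := ih fun j hj => hk j (by omega)
    simp only [cf, sub_zero] at ih ⊢
    rw [List.replicate_succ, List.cons_append, cf, eq_sub_of_add_eq ih,
      inv_neg_two_sub_inv_sub_one_add_one hw hw1]
    push_cast
    ring

lemma natCast_add_one_sub_inv_ne_zero {y : ℚ} (hy : 1 ≤ |y|) (j : ℕ) :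
    (j : ℚ) + 1 - (y + 1)⁻¹ ≠ 0 := by
  intro h
  have hinv : (y + 1)⁻¹ = j + 1 := by linarith
  have hpos : 0 < y + 1 := inv_pos.mp (by rw [hinv]; positivity)
  have hle : y + 1 ≤ 1 := by
    rw [← inv_inv (y + 1), hinv]
    exact inv_le_one_of_one_le₀ (by linarith [j.cast_nonneg (α := ℚ)])
  cases abs_cases y <;> linarith

theorem stmt_3_general (a : ℤ) (k : ℕ) (y : ℚ)
    (hy1 : 1 ≤ |y|) (hy2 : y ≠ -1) :
    cf ((a : ℚ) :: (List.replicate k (-2 : ℚ) ++ [y])) =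
      cf [(a : ℚ) + 1, (k : ℚ) + 1, y + 1] := by
  have key := cf_replicate_neg_two_append_add_one (k := k) (y := y)
    (fun h => hy2 (eq_neg_of_add_eq_zero_left h))
    (fun j _ => natCast_add_one_sub_inv_ne_zero hy1 j)
  calc cf ((a : ℚ) :: (List.replicate k (-2 : ℚ) ++ [y]))
      = ((a : ℚ) + 1 - (cf (List.replicate k (-2) ++ [y]) + 1))⁻¹ := by rw [cf]; ring
    _ = cf [(a : ℚ) + 1, (k : ℚ) + 1, y + 1] := by rw [key]; rfl

theorem stmt_3 (a : ℤ) (ha : a ≠ 0) (k : ℕ) (hk : 1 ≤ k) (y : ℚ)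
    (hy1 : 1 ≤ |y|) (hy2 : y ≠ -1) :
    cf ((a : ℚ) :: (List.replicate k (-2 : ℚ) ++ [y])) =
      cf [(a : ℚ) + 1, (k : ℚ) + 1, y + 1] :=
  stmt_3_general a k y hy1 hy2
end

section
/- Let a be a nonzero integer and let b, c ≥ 1 be integers. Then [a, 2, …, 2, 4, 2, …, 2] (with b copies of 2 before the entry 4 and c copies of 2 after it) = [a − 1, −(b+1), 2, −(c+1)]. -/
/-! A `2` acts by `x ↦ (2 - x)⁻¹`, which sends `p / (p + d)` to `(p + d) / (p + 2d)`: a run of `2`s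
adds a multiple of `d` to numerator and denominator. Hence, with `n = b (2c + 3) + c + 1`, the tail
`2, …, 2, 4, 2, …, 2` has value `n / (n + 2c + 3)`, while `[-(b+1), 2, -(c+1)]` has value
`-(2c + 3) / (n + 2c + 3)`, which is exactly one less. -/

theorem cf_cons (a : ℚ) (t : List ℚ) : cf (a :: t) = (a - cf t)⁻¹ := rfl

theorem cf_cons_of_eq_div (a : ℚ) (t : List ℚ) {u v : ℚ} (hv : v ≠ 0) (ht : cf t = u / v) :
    cf (a :: t) = v / (a * v - u) := by
  rw [cf_cons, ht, sub_div' hv, inv_div]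

theorem cf_replicate_two_append_s4 (n : ℕ) (t : List ℚ) {p d : ℚ} (hp : 0 ≤ p) (hd : 0 < d)
    (ht : cf t = p / (p + d)) :
    cf (List.replicate n 2 ++ t) = (p + n * d) / (p + (n + 1) * d) := by
  induction n with
  | zero => simpa using ht
  | succ n ih =>
    rw [List.replicate_succ, List.cons_append, cf_cons_of_eq_div _ _ (by positivity) ih]
    push_cast
    ring_nf

theorem cf_replicate_two (c : ℕ) : cf (List.replicate c 2) = c / (c + 1) := by
  simpa using cf_replicate_two_append_s4 c [] le_rfl one_pos (by simp [cf])

theorem cf_four_cons_replicate_two (c : ℕ) :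
    cf (4 :: List.replicate c 2) = (c + 1) / ((c + 1) + (2 * c + 3)) := by
  rw [cf_cons_of_eq_div _ _ (by positivity) (cf_replicate_two c)]
  ring_nf

theorem cf_replicate_two_append_four_cons_replicate_two (b c : ℕ) :
    cf (List.replicate b 2 ++ 4 :: List.replicate c 2) =
      (c + 1 + b * (2 * c + 3)) / (c + 1 + (b + 1) * (2 * c + 3)) :=
  cf_replicate_two_append_s4 b _ (by positivity) (by positivity) (cf_four_cons_replicate_two c)

theorem cf_neg_succ_two_neg_succ (b c : ℕ) :
    cf [-((b : ℚ) + 1), 2, -((c : ℚ) + 1)] =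
      (c + 1 + b * (2 * c + 3)) / (c + 1 + (b + 1) * (2 * c + 3)) - 1 := by
  have h₁ : cf [-((c : ℚ) + 1)] = -1 / (c + 1) := by
    rw [cf_cons, cf, sub_zero, inv_neg, neg_div, one_div]
  have h₂ := cf_cons_of_eq_div 2 _ (by positivity) h₁
  have h₃ := cf_cons_of_eq_div (-((b : ℚ) + 1)) _ (by rw [sub_neg_eq_add]; positivity) h₂
  have hD : (0 : ℚ) < c + 1 + (b + 1) * (2 * c + 3) := by positivity
  rw [h₃, div_sub_one hD.ne', div_eq_div_iff (by nlinarith) hD.ne']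
  ring

theorem stmt_4_general (a : ℤ) (b c : ℕ) :
    cf ((a : ℚ) :: (List.replicate b (2 : ℚ) ++ (4 : ℚ) :: List.replicate c (2 : ℚ))) =
      cf [(a : ℚ) - 1, -((b : ℚ) + 1), 2, -((c : ℚ) + 1)] := by
  rw [cf_cons, cf_cons, cf_neg_succ_two_neg_succ, cf_replicate_two_append_four_cons_replicate_two]
  ring

theorem stmt_4 (a : ℤ) (ha : a ≠ 0) (b c : ℕ) (hb : 1 ≤ b) (hc : 1 ≤ c) :
    cf ((a : ℚ) :: (List.replicate b (2 : ℚ) ++ (4 : ℚ) :: List.replicate c (2 : ℚ))) =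
      cf [(a : ℚ) - 1, -((b : ℚ) + 1), 2, -((c : ℚ) + 1)] :=
  stmt_4_general a b c
end

section
/- Let a and b be nonzero integers with |b| ≥ 2, and let c ≥ 1 be an integer. Then [a, b, 2, …, 2] (with c copies of 2 after the entry b) = [a, b − 1, −(c+1)]. -/
theorem cf_cons_congr (a : ℚ) {l l' : List ℚ} (h : cf l = cf l') : cf (a :: l) = cf (a :: l') := by
  rw [cf, cf, h]

theorem cf_cons_replicate_two (x : ℚ) (c : ℕ) :
    cf (x :: List.replicate c 2) = cf [x - 1, -((c : ℚ) + 1)] := by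
  have hc : (c : ℚ) + 1 ≠ 0 := by positivity
  rw [cf, cf_replicate_two]
  simp only [cf, sub_zero, inv_neg]
  congr 1
  field_simp
  ring

theorem stmt_11_general (a b : ℤ)
    (c : ℕ) :
    cf ((a : ℚ) :: (b : ℚ) :: List.replicate c (2 : ℚ)) =
      cf [(a : ℚ), (b : ℚ) - 1, -((c : ℚ) + 1)] :=
  cf_cons_congr a (cf_cons_replicate_two b c)

theorem stmt_11 (a b : ℤ) (ha : a ≠ 0) (hb : b ≠ 0) (hb2 : 2 ≤ |b|)
    (c : ℕ) (hc : 1 ≤ c) :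
    cf ((a : ℚ) :: (b : ℚ) :: List.replicate c (2 : ℚ)) =
      cf [(a : ℚ), (b : ℚ) - 1, -((c : ℚ) + 1)] :=
  stmt_11_general a b c
end

section
/- Let a and b be nonzero integers with |b| ≥ 2, and let c ≥ 1 be an integer. Then [a, b, −2, …, −2] (with c copies of −2 after the entry b) = [a, b + 1, c + 1]. -/
lemma cf_replicate_neg_two (c : ℕ) : cf (List.replicate c (-2)) = -c / (c + 1) := by
  induction c with
  | zero => simp [cf]
  | succ n ih =>
    rw [List.replicate_succ, cf, ih]
    push_cast
    rw [inv_eq_iff_eq_inv]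
    field_simp
    ring

lemma cf_cons_replicate_neg_two (q : ℚ) (c : ℕ) :
    cf (q :: List.replicate c (-2)) = cf [q + 1, c + 1] := by
  simp only [cf, cf_replicate_neg_two, sub_zero]
  congr 1
  field_simp
  ring

theorem stmt_12_general (a b : ℤ) (c : ℕ) :
    cf ((a : ℚ) :: (b : ℚ) :: List.replicate c (-2 : ℚ)) =
      cf [(a : ℚ), (b : ℚ) + 1, (c : ℚ) + 1] := by
  rw [cf, cf_cons_replicate_neg_two]
  rfl

theorem stmt_12 (a b : ℤ) (ha : a ≠ 0) (hb : b ≠ 0) (hb2 : 2 ≤ |b|)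
    (c : ℕ) (hc : 1 ≤ c) :
    cf ((a : ℚ) :: (b : ℚ) :: List.replicate c (-2 : ℚ)) =
      cf [(a : ℚ), (b : ℚ) + 1, (c : ℚ) + 1] :=
  stmt_12_general a b c
end

section
/- Let k ≥ 3 and let b_1, …, b_k be nonzero even integers such that the index 1 is a channel index and the sequence has at most two channel indices in total. Then at least one of the following holds: (i) b_2 = ⋯ = b_k = 2, or b_2 = ⋯ = b_k = −2; (ii) k = 3, |b_2| ≥ 4 and |b_3| ≥ 4; (iii) |b_2| ≥ 4 and either b_3 = ⋯ = b_k = 2 or b_3 = ⋯ = b_k = −2; (iv) |b_k| ≥ 4 and either b_2 = ⋯ = b_{k−1} = 2 or b_2 = ⋯ = b_{k−1} = −2; (v) there exists j with 2 ≤ j ≤ k − 1 such that either b_2 = ⋯ = b_j = 2 and b_{j+1} = ⋯ = b_k = −2, or b_2 = ⋯ = b_j = −2 and b_{j+1} = ⋯ = b_k = 2. -/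
/-- `i` is a channel index for the (1-indexed) sequence `b` if
`b i * b (i+1) < 0` or `b i * b (i+1) > 4`. -/
def ChannelIndex (b : ℕ → ℤ) (i : ℕ) : Prop :=
  b i * b (i + 1) < 0 ∨ 4 < b i * b (i + 1)

instance (b : ℕ → ℤ) (i : ℕ) : Decidable (ChannelIndex b i) := by
  unfold ChannelIndex; infer_instance

/-
Because index 1 is already a channel index, at most one `j ∈ [2, k-1]` is one. Across a
non-channel index the sequence keeps the value `2` or `-2`, so each of the stretches `[2, j]` and
`[j+1, k]` is a constant run of `2`s or of `-2`s, or a single entry of absolute value at least 4.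
The runs have opposite signs because `j` is a channel index, and the combinations of the two
stretches give the five alternatives.
-/

theorem channelIndex_iff {b : ℕ → ℤ} {i : ℕ} (hi : b i ≠ 0 ∧ Even (b i))
    (hi' : b (i + 1) ≠ 0 ∧ Even (b (i + 1))) :
    ChannelIndex b i ↔ ¬((b i = 2 ∧ b (i + 1) = 2) ∨ (b i = -2 ∧ b (i + 1) = -2)) := by
  obtain ⟨hx, m, hm⟩ := hi
  obtain ⟨hy, n, hn⟩ := hi'
  have hmn : m * n ≠ 0 := mul_ne_zero (by omega) (by omega)
  have hprod : b i * b (i + 1) = 4 * (m * n) := by rw [hm, hn]; ring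
  have hunit : m * n = 1 ↔ (m = 1 ∧ n = 1) ∨ (m = -1 ∧ n = -1) :=
    Int.mul_eq_one_iff_eq_one_or_neg_one
  unfold ChannelIndex
  rw [hprod]
  omega

theorem four_le_abs_of_even {x : ℤ} (hx : x ≠ 0) (he : Even x) (h2 : x ≠ 2) (hm2 : x ≠ -2) :
    4 ≤ |x| := by
  obtain ⟨m, rfl⟩ := he
  rw [le_abs']
  omega

theorem eq_two_or_neg_two_of_not_channelIndex {b : ℕ → ℤ} {a m : ℕ} (ham : a ≤ m)
    (hb : ∀ i, a ≤ i → i ≤ m → b i ≠ 0 ∧ Even (b i))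
    (hnc : ∀ i, a ≤ i → i < m → ¬ ChannelIndex b i) :
    ((∀ i, a ≤ i → i ≤ m → b i = 2) ∨ (∀ i, a ≤ i → i ≤ m → b i = -2)) ∨
      (a = m ∧ 4 ≤ |b a|) := by
  induction m, ham using Nat.le_induction with
  | base =>
    by_cases h2 : b a = 2
    · exact .inl <| .inl fun i hi hi' => le_antisymm hi' hi ▸ h2
    by_cases hm2 : b a = -2
    · exact .inl <| .inr fun i hi hi' => le_antisymm hi' hi ▸ hm2
    obtain ⟨h0, he⟩ := hb a le_rfl le_rfl
    exact .inr ⟨rfl, four_le_abs_of_even h0 he h2 hm2⟩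
  | succ m ham ih =>
    have hpair := not_not.mp <|
      (channelIndex_iff (hb m ham (by omega)) (hb (m + 1) (by omega) le_rfl)).not.mp
        (hnc m ham (by omega))
    have hconst : ∀ i, a ≤ i → i ≤ m → b i = b m := by
      rcases ih (fun i hi hi' => hb i hi (by omega)) (fun i hi hi' => hnc i hi (by omega))
        with (h | h) | ⟨rfl, -⟩
      · exact fun i hi hi' => (h i hi hi').trans (h m ham le_rfl).symm
      · exact fun i hi hi' => (h i hi hi').trans (h m ham le_rfl).symm
      · exact fun i hi hi' => by rw [le_antisymm hi' hi]
    have hconst' (c : ℤ) (hm : b m = c) (hm' : b (m + 1) = c) (i : ℕ) (hi : a ≤ i)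
        (hi' : i ≤ m + 1) : b i = c := by
      obtain hi' | rfl := Nat.le_succ_iff.mp hi'
      exacts [(hconst i hi hi').trans hm, hm']
    rcases hpair with ⟨hm, hm'⟩ | ⟨hm, hm'⟩
    exacts [.inl <| .inl <| hconst' 2 hm hm', .inl <| .inr <| hconst' (-2) hm hm']

theorem eq_of_channelIndex_of_card_le_two {k : ℕ} {b : ℕ → ℤ} (hch1 : ChannelIndex b 1)
    (hch2 : ((Finset.Icc 1 (k - 1)).filter (fun i => ChannelIndex b i)).card ≤ 2)
    {i j : ℕ} (hi : 2 ≤ i) (hik : i ≤ k - 1) (hj : 2 ≤ j) (hjk : j ≤ k - 1)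
    (hci : ChannelIndex b i) (hcj : ChannelIndex b j) : i = j := by
  by_contra hne
  have hsub : ({1, i, j} : Finset ℕ) ⊆ (Finset.Icc 1 (k - 1)).filter (ChannelIndex b ·) := by
    intro x hx
    simp only [Finset.mem_insert, Finset.mem_singleton] at hx
    simp only [Finset.mem_filter, Finset.mem_Icc]
    rcases hx with rfl | rfl | rfl
    exacts [⟨⟨le_rfl, by omega⟩, hch1⟩, ⟨⟨by omega, hik⟩, hci⟩, ⟨⟨by omega, hjk⟩, hcj⟩]
  have hcard : ({1, i, j} : Finset ℕ).card = 3 :=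
    Finset.card_eq_three.mpr ⟨1, i, j, by omega, by omega, hne, rfl⟩
  have := Finset.card_le_card hsub
  omega

theorem stmt_15 (k : ℕ) (hk : 3 ≤ k) (b : ℕ → ℤ)
    (hb : ∀ i, 1 ≤ i → i ≤ k → b i ≠ 0 ∧ Even (b i))
    (hch1 : ChannelIndex b 1)
    (hch2 : ((Finset.Icc 1 (k - 1)).filter (fun i => ChannelIndex b i)).card ≤ 2) :
    ((∀ i, 2 ≤ i → i ≤ k → b i = 2) ∨ (∀ i, 2 ≤ i → i ≤ k → b i = -2)) ∨
    (k = 3 ∧ 4 ≤ |b 2| ∧ 4 ≤ |b 3|) ∨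
    (4 ≤ |b 2| ∧
      ((∀ i, 3 ≤ i → i ≤ k → b i = 2) ∨ (∀ i, 3 ≤ i → i ≤ k → b i = -2))) ∨
    (4 ≤ |b k| ∧
      ((∀ i, 2 ≤ i → i ≤ k - 1 → b i = 2) ∨ (∀ i, 2 ≤ i → i ≤ k - 1 → b i = -2))) ∨
    (∃ j, 2 ≤ j ∧ j ≤ k - 1 ∧
      (((∀ i, 2 ≤ i → i ≤ j → b i = 2) ∧ (∀ i, j + 1 ≤ i → i ≤ k → b i = -2)) ∨
       ((∀ i, 2 ≤ i → i ≤ j → b i = -2) ∧ (∀ i, j + 1 ≤ i → i ≤ k → b i = 2)))) := by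
  by_cases hC : ∃ j, 2 ≤ j ∧ j ≤ k - 1 ∧ ChannelIndex b j
  · obtain ⟨j, hj2, hjk, hj⟩ := hC
    have hnc (i : ℕ) (hi : 2 ≤ i) (hik : i ≤ k - 1) (hij : i ≠ j) : ¬ ChannelIndex b i :=
      fun hci => hij (eq_of_channelIndex_of_card_le_two hch1 hch2 hi hik hj2 hjk hci hj)
    have hjj := (channelIndex_iff (hb j (by omega) (by omega))
      (hb (j + 1) (by omega) (by omega))).mp hj
    have hL := eq_two_or_neg_two_of_not_channelIndex hj2
      (fun i hi hi' => hb i (by omega) (by omega))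
      (fun i hi hi' => hnc i hi (by omega) (by omega))
    have hR := eq_two_or_neg_two_of_not_channelIndex (a := j + 1) (m := k) (by omega)
      (fun i hi hi' => hb i (by omega) hi')
      (fun i hi hi' => hnc i (by omega) (by omega) (by omega))
    rcases hL with (hL | hL) | ⟨rfl, hL⟩ <;> rcases hR with (hR | hR) | ⟨rfl, hR⟩
    · exact absurd (.inl ⟨hL j hj2 le_rfl, hR (j + 1) le_rfl (by omega)⟩) hjj
    · exact .inr <| .inr <| .inr <| .inr ⟨j, hj2, hjk, .inl ⟨hL, hR⟩⟩
    · exact .inr <| .inr <| .inr <| .inl ⟨hR, .inl fun i hi hi' => hL i hi (by omega)⟩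
    · exact .inr <| .inr <| .inr <| .inr ⟨j, hj2, hjk, .inr ⟨hL, hR⟩⟩
    · exact absurd (.inr ⟨hL j hj2 le_rfl, hR (j + 1) le_rfl (by omega)⟩) hjj
    · exact .inr <| .inr <| .inr <| .inl ⟨hR, .inr fun i hi hi' => hL i hi (by omega)⟩
    · exact .inr <| .inr <| .inl ⟨hL, .inl hR⟩
    · exact .inr <| .inr <| .inl ⟨hL, .inr hR⟩
    · exact .inr <| .inl ⟨rfl, hL, hR⟩
  · push Not at hC
    rcases eq_two_or_neg_two_of_not_channelIndex (a := 2) (m := k) (by omega)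
      (fun i hi hi' => hb i (by omega) hi') (fun i hi hi' => hC i hi (by omega)) with h | ⟨h, -⟩
    · exact .inl h
    · omega
end

section
/- Let k ≥ 1 and let b_1, …, b_k be nonzero even integers. Write the continued fraction value [b_1, …, b_k] = n/d in lowest terms with d > 0 (this value is nonzero, with |value| < 1). Then exactly one of n and d is even; moreover, d is even if and only if k is odd (equivalently, n is even if and only if k is even). -/
namespace Rat

theorem intCast_sub_num (n : ℤ) (q : ℚ) : ((n : ℚ) - q).num = n * q.den - q.num := by
  have h := mul_den_eq_num ((n : ℚ) - q)
  rw [intCast_sub_den, sub_mul, mul_den_eq_num] at h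
  exact_mod_cast h.symm

theorem even_inv_num_iff {q : ℚ} (hq : q ≠ 0) : Even q⁻¹.num ↔ Even q.den := by
  have hsign : ¬Even q.num.sign := by
    rcases Int.sign_trichotomy q.num with h | h | h <;> simp_all
  rw [num_inv, Int.even_mul, Int.even_coe_nat]
  simp [hsign]

theorem even_inv_den_iff {q : ℚ} (hq : q ≠ 0) : Even q⁻¹.den ↔ Even q.num := by
  rw [den_inv, if_neg (num_ne_zero.mpr hq), Int.natAbs_even]

end Rat

theorem two_le_abs_of_forall_even_ne_zero {l : List ℤ} (hl : ∀ a ∈ l, Even a ∧ a ≠ 0) :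
    ∀ x ∈ (l.map (↑) : List ℚ), 2 ≤ |x| := by
  simp only [List.mem_map]
  rintro _ ⟨a, ha, rfl⟩
  obtain ⟨heven, hne⟩ := hl a ha
  have : (2 : ℤ) ≤ |a| := Int.le_of_dvd (abs_pos.mpr hne) ((dvd_abs 2 a).mpr heven.two_dvd)
  exact_mod_cast this

theorem one_lt_abs_sub_of_two_le_abs {a q : ℚ} (ha : 2 ≤ |a|) (hq : |q| < 1) : 1 < |a - q| := by
  linarith [abs_sub_abs_le_abs_sub a q]

theorem abs_cf_lt_one {l : List ℚ} (hl : ∀ a ∈ l, 2 ≤ |a|) : |cf l| < 1 := by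
  induction l with
  | nil => simp [cf]
  | cons a t ih =>
    rw [cf, abs_inv]
    exact inv_lt_one_of_one_lt₀ <| one_lt_abs_sub_of_two_le_abs (hl a List.mem_cons_self)
      (ih fun x hx => hl x (List.mem_cons_of_mem a hx))

theorem sub_cf_ne_zero {a : ℚ} {t : List ℚ} (hl : ∀ x ∈ a :: t, 2 ≤ |x|) : a - cf t ≠ 0 := by
  have h := one_lt_abs_sub_of_two_le_abs (hl a List.mem_cons_self)
    (abs_cf_lt_one fun x hx => hl x (List.mem_cons_of_mem a hx))
  exact abs_pos.mp (one_pos.trans h)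

theorem cf_ne_zero {l : List ℚ} (hne : l ≠ []) (hl : ∀ a ∈ l, 2 ≤ |a|) : cf l ≠ 0 := by
  obtain ⟨a, t, rfl⟩ := List.exists_cons_of_ne_nil hne
  exact inv_ne_zero (sub_cf_ne_zero hl)

theorem even_cf_num_den {l : List ℤ} (hl : ∀ a ∈ l, Even a ∧ a ≠ 0) :
    (Even (cf (l.map (↑))).num ↔ Even l.length) ∧ (Even (cf (l.map (↑))).den ↔ Odd l.length) := by
  induction l with
  | nil => simp [cf]
  | cons a t ih =>
    obtain ⟨ihn, ihd⟩ := ih fun x hx => hl x (by simp [hx])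
    have hsub : (a : ℚ) - cf (t.map (↑)) ≠ 0 := sub_cf_ne_zero (two_le_abs_of_forall_even_ne_zero hl)
    have hnum : Even ((a : ℚ) - cf (t.map (↑))).num ↔ Even (cf (t.map (↑))).num := by
      simp [Rat.intCast_sub_num, Int.even_sub, (hl a (by simp)).1]
    simp only [List.map_cons, cf, List.length_cons, Nat.even_add_one, ← Nat.not_even_iff_odd,
      not_not, Rat.even_inv_num_iff hsub, Rat.even_inv_den_iff hsub, Rat.intCast_sub_den, hnum,
      ihn, ihd, iff_self, and_self]

theorem stmt_18 (k : ℕ) (hk : 1 ≤ k) (b : ℕ → ℤ)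
    (hb : ∀ i, 1 ≤ i → i ≤ k → b i ≠ 0 ∧ Even (b i))
    (v : ℚ) (hv : v = cf ((List.range k).map fun i => ((b (i + 1) : ℚ)))) :
    v ≠ 0 ∧ |v| < 1 ∧ Xor' (Even v.num) (Even v.den) ∧
      (Even v.den ↔ Odd k) ∧ (Even v.num ↔ Even k) := by
  set l := (List.range k).map fun i => b (i + 1)
  have hl : ∀ a ∈ l, Even a ∧ a ≠ 0 := by
    simp only [l, List.mem_map, List.mem_range]
    rintro _ ⟨i, hi, rfl⟩
    exact (hb (i + 1) (by omega) (by omega)).symm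
  have hlen : l.length = k := by simp [l]
  rw [show (List.range k).map (fun i => (b (i + 1) : ℚ)) = l.map (↑) by simp [l]] at hv
  have hne : l.map ((↑) : ℤ → ℚ) ≠ [] := by
    rw [Ne, List.map_eq_nil_iff, ← List.length_eq_zero_iff, hlen]
    omega
  obtain ⟨hnum, hden⟩ := even_cf_num_den hl
  rw [hlen, ← hv] at hnum hden
  refine ⟨hv ▸ cf_ne_zero hne (two_le_abs_of_forall_even_ne_zero hl),
    hv ▸ abs_cf_lt_one (two_le_abs_of_forall_even_ne_zero hl), ?_, hden, hnum⟩
  rw [hnum, hden, ← Nat.not_even_iff_odd]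
  tauto
end
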